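/- arXiv:1705.02065 — 2 statements merged into one kernel-verified Lean document; each statement's English description precedes it below -/
import Mathlib

section
/- Let w ∈ S_n and (i,j) ∈ D(w). Then the number of ℓ such that (ℓ, i, w⁻¹(j)) is a 132-pattern of w is exactly r_w(i,j): #{ℓ : ℓ < i < w⁻¹(j) and w(ℓ) < j < w(i)} = r_w(i,j). -/
open Finset

/-- The Rothe diagram of a permutation (0-based coordinates). -/
def Rothe {n : ℕ} (w : Equiv.Perm (Fin n)) : Finset (Fin n × Fin n) :=
  Finset.univ.filter (fun p => p.2 < w p.1 ∧ p.1 < w⁻¹ p.2)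

/-- The rank function r_w(i,j) = #{k : k ≤ i and w(k) ≤ j}. -/
def rk {n : ℕ} (w : Equiv.Perm (Fin n)) (i j : Fin n) : ℕ :=
  (Finset.univ.filter (fun k => k ≤ i ∧ w k ≤ j)).card

/-- m_i(w) = #{j : j > i and w(j) < w(i)}. -/
def mrow {n : ℕ} (w : Equiv.Perm (Fin n)) (i : Fin n) : ℕ :=
  (Finset.univ.filter (fun j => i < j ∧ w j < w i)).card

/-- The set of 132-patterns of w. -/
def P132 {n : ℕ} (w : Equiv.Perm (Fin n)) : Finset (Fin n × Fin n × Fin n) :=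
  Finset.univ.filter
    (fun t => t.1 < t.2.1 ∧ t.2.1 < t.2.2 ∧ w t.1 < w t.2.2 ∧ w t.2.2 < w t.2.1)

section Rothe

variable {n : ℕ} {w : Equiv.Perm (Fin n)} {i j : Fin n}

theorem mem_Rothe : (i, j) ∈ Rothe w ↔ j < w i ∧ i < w⁻¹ j := by
  simp [Rothe]

theorem le_and_le_iff_lt_and_lt_of_mem_Rothe (h : (i, j) ∈ Rothe w) (k : Fin n) :
    k ≤ i ∧ w k ≤ j ↔ k < i ∧ w k < j := by
  obtain ⟨hj, hi⟩ := mem_Rothe.1 h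
  refine ⟨fun ⟨hki, hkj⟩ => ⟨hki.lt_of_ne ?_, hkj.lt_of_ne ?_⟩,
    fun ⟨hki, hkj⟩ => ⟨hki.le, hkj.le⟩⟩
  · rintro rfl
    exact hkj.not_gt hj
  · rintro rfl
    exact hki.not_gt (by simpa using hi)

theorem rk_eq_card_lt_of_mem_Rothe (h : (i, j) ∈ Rothe w) :
    rk w i j = #{k | k < i ∧ w k < j} :=
  congrArg card (filter_congr fun k _ => le_and_le_iff_lt_and_lt_of_mem_Rothe h k)

end Rothe

/-- For (i,j) ∈ D(w), the number of ℓ such that (ℓ, i, w⁻¹(j)) is a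
132-pattern of w equals r_w(i,j). -/
theorem stmt16 {n : ℕ} (w : Equiv.Perm (Fin n)) (i j : Fin n)
    (h : (i, j) ∈ Rothe w) :
    (Finset.univ.filter
        (fun ℓ => ℓ < i ∧ i < w⁻¹ j ∧ w ℓ < j ∧ j < w i)).card = rk w i j := by
  obtain ⟨hj, hi⟩ := mem_Rothe.1 h
  rw [rk_eq_card_lt_of_mem_Rothe h]
  congr 1
  exact filter_congr fun ℓ _ => by simp only [hi, hj, true_and, and_true]
end

section
/- For w ∈ S_n, B_w = T_w (the left-justified and top-justified pipe dreams coincide) if and only if w avoids the pattern 132. -/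
open Finset

/-! For a box (i, j) of the Rothe diagram, j - r_w(i, j) is the number of boxes to its left in
row i and i - r_w(i, j) the number of boxes above it in column j. So B_w is the diagram with its
rows pushed to the left and T_w the diagram with its columns pushed up.

If w avoids 132, every row and every column of the diagram is already an initial segment, and
B_w = D(w) = T_w. Conversely, if B_w = T_w then this shape is both left- and top-justified, so
the row lengths, i.e. the Lehmer code m_i(w), weakly decrease. A 132 pattern i < j < k breaks
this: if a is the last position before j with w(a) < w(k), then every position strictly between
a and j has a value above w(k), so the boxes of row a move into row j, which also gains the box
of column w(k). -/

lemma Finset.image_card_filter_lt {α : Type*} [LinearOrder α] (s : Finset α) :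
    s.image (fun x => #{y ∈ s | y < x}) = range #s := by
  have hmono : StrictMonoOn (fun x => #{y ∈ s | y < x}) s := fun x hx x' _ hxx' =>
    card_lt_card <| (ssubset_iff_of_subset fun y hy => by
      simp only [mem_filter] at hy ⊢; exact ⟨hy.1, hy.2.trans hxx'⟩).2
      ⟨x, by simpa [hxx'] using hx, by simp⟩
  refine eq_of_subset_of_card_le (fun m hm => ?_) ?_
  · obtain ⟨x, hx, rfl⟩ := mem_image.1 hm
    exact mem_range.2 <| card_lt_card <| filter_ssubset.2 ⟨x, hx, lt_irrefl x⟩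
  · rw [card_range, card_image_of_injOn hmono.injOn]

section RotheDiagram

variable {n : ℕ}

@[simp]
lemma mem_Rothe_s19 {w : Equiv.Perm (Fin n)} {p : Fin n × Fin n} :
    p ∈ Rothe w ↔ p.2 < w p.1 ∧ p.1 < w⁻¹ p.2 := by
  simp [Rothe]

lemma swap_mem_Rothe_inv {w : Equiv.Perm (Fin n)} {p : Fin n × Fin n} :
    p.swap ∈ Rothe w⁻¹ ↔ p ∈ Rothe w := by
  simp [and_comm]

lemma rk_inv (w : Equiv.Perm (Fin n)) (i j : Fin n) : rk w⁻¹ j i = rk w i j :=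
  card_equiv w.symm fun k => by simp [and_comm]

def rotheRow (w : Equiv.Perm (Fin n)) (i : Fin n) : Finset (Fin n) :=
  {j | (i, j) ∈ Rothe w}

@[simp]
lemma mem_rotheRow {w : Equiv.Perm (Fin n)} {i j : Fin n} :
    j ∈ rotheRow w i ↔ (i, j) ∈ Rothe w := by
  simp [rotheRow]

lemma card_rotheRow (w : Equiv.Perm (Fin n)) (i : Fin n) : #(rotheRow w i) = mrow w i :=
  card_equiv w.symm fun j => by simp [and_comm]

lemma sub_rk_eq_card_rotheRow {w : Equiv.Perm (Fin n)} {i j : Fin n}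
    (h : (i, j) ∈ Rothe w) : (j : ℕ) - rk w i j = #{j' ∈ rotheRow w i | j' < j} := by
  obtain ⟨hj, hi⟩ := mem_Rothe_s19.1 h
  have hrk : rk w i j = #{x : Fin n | x < j ∧ w⁻¹ x ≤ i} := by
    refine card_equiv w fun k => ?_
    have hk : w k = j → i < k := fun hkj => by simpa [← hkj] using hi
    simp only [mem_filter, mem_univ, true_and, Equiv.Perm.coe_inv, Equiv.symm_apply_apply]
    grind
  have hrow : #{j' ∈ rotheRow w i | j' < j} = #{x : Fin n | x < j ∧ ¬ w⁻¹ x ≤ i} := by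
    congr 1; ext x
    simp only [mem_filter, mem_univ, true_and, mem_rotheRow, mem_Rothe_s19, not_le]
    exact ⟨fun h => ⟨h.2, h.1.2⟩, fun h => ⟨⟨h.1.trans hj, h.2⟩, h.1⟩⟩
  have hsplit :=
    card_filter_add_card_filter_not (s := {x : Fin n | x < j}) (fun x => w⁻¹ x ≤ i)
  rw [filter_filter, filter_filter, filter_gt_eq_Iio, Fin.card_Iio] at hsplit
  omega

lemma Rothe_inv (w : Equiv.Perm (Fin n)) : Rothe w⁻¹ = (Rothe w).image Prod.swap := by
  ext p
  simp only [mem_image]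
  constructor
  · exact fun hp => ⟨p.swap, swap_mem_Rothe_inv.1 (by rwa [Prod.swap_swap]), p.swap_swap⟩
  · rintro ⟨q, hq, rfl⟩
    exact swap_mem_Rothe_inv.2 hq

/-- `leftJustified w` is `B_w` and `topJustified w` is `T_w`. -/
def leftJustified (w : Equiv.Perm (Fin n)) : Finset (ℕ × ℕ) :=
  (Rothe w).image fun p => ((p.1 : ℕ), (p.2 : ℕ) - rk w p.1 p.2)

def topJustified (w : Equiv.Perm (Fin n)) : Finset (ℕ × ℕ) :=
  (Rothe w).image fun p => ((p.1 : ℕ) - rk w p.1 p.2, (p.2 : ℕ))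

lemma mem_leftJustified {w : Equiv.Perm (Fin n)} {a b : ℕ} :
    (a, b) ∈ leftJustified w ↔ ∃ i : Fin n, (i : ℕ) = a ∧ b < #(rotheRow w i) := by
  simp only [leftJustified, mem_image, Prod.exists, Prod.mk.injEq]
  constructor
  · rintro ⟨i, j, hij, rfl, rfl⟩
    refine ⟨i, rfl, ?_⟩
    rw [sub_rk_eq_card_rotheRow hij, ← mem_range, ← image_card_filter_lt]
    exact mem_image_of_mem _ (mem_rotheRow.2 hij)
  · rintro ⟨i, rfl, hb⟩
    rw [← mem_range, ← image_card_filter_lt] at hb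
    obtain ⟨j, hj, rfl⟩ := mem_image.1 hb
    exact ⟨i, j, mem_rotheRow.1 hj, rfl, sub_rk_eq_card_rotheRow (mem_rotheRow.1 hj)⟩

lemma topJustified_eq (w : Equiv.Perm (Fin n)) :
    topJustified w = (leftJustified w⁻¹).image Prod.swap := by
  rw [leftJustified, Rothe_inv, image_image, image_image, topJustified]
  refine image_congr fun p _ => ?_
  simp [rk_inv]

lemma mem_topJustified {w : Equiv.Perm (Fin n)} {a b : ℕ} :
    (a, b) ∈ topJustified w ↔ ∃ j : Fin n, (j : ℕ) = b ∧ a < #(rotheRow w⁻¹ j) := by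
  rw [topJustified_eq, ← mem_leftJustified]
  simp

lemma antitone_card_rotheRow {w : Equiv.Perm (Fin n)} (h : leftJustified w = topJustified w) :
    Antitone fun i => #(rotheRow w i) := by
  intro i i' hii'
  by_contra! hlt
  obtain ⟨j, hj, hcol⟩ := mem_topJustified.1 (h ▸ mem_leftJustified.2 ⟨i', rfl, hlt⟩)
  obtain ⟨i₀, hi₀, hrow⟩ :=
    mem_leftJustified.1 <|
      h ▸ mem_topJustified.2 ⟨j, hj, (Fin.le_iff_val_le_val.1 hii').trans_lt hcol⟩
  rw [Fin.ext hi₀] at hrow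
  exact hrow.false

lemma exists_lt_mrow_lt {w : Equiv.Perm (Fin n)} {i j k : Fin n} (hij : i < j) (hjk : j < k)
    (hik : w i < w k) (hkj : w k < w j) : ∃ a < j, mrow w a < mrow w j := by
  set s : Finset (Fin n) := {x | x < j ∧ w x < w k}
  have hs : s.Nonempty := ⟨i, by simp [s, hij, hik]⟩
  obtain ⟨a, has, hmax⟩ := s.exists_max_image id hs
  obtain ⟨haj, hak⟩ : a < j ∧ w a < w k := by simpa [s] using has
  have above : ∀ x, a < x → x < j → w k < w x := fun x hax hxj =>
    (lt_or_gt_of_ne (w.injective.ne (hxj.trans hjk).ne)).resolve_left fun hxk =>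
      (hmax x (by simp [s, hxj, hxk])).not_gt hax
  refine ⟨a, haj, card_lt_card <| (ssubset_iff_of_subset fun x hx => ?_).2 ⟨k, ?_, ?_⟩⟩
  · simp only [mem_filter, mem_univ, true_and] at hx ⊢
    obtain ⟨hax, hxa⟩ := hx
    refine ⟨lt_of_not_ge fun hxj => ?_, hxa.trans (hak.trans hkj)⟩
    rcases hxj.lt_or_eq with hxj | rfl
    · exact (hxa.trans hak).not_gt (above x hax hxj)
    · exact lt_irrefl _ (hxa.trans (hak.trans hkj))
  · simp [hjk, hkj]
  · simp [hak.le]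

def Avoids132 (w : Equiv.Perm (Fin n)) : Prop :=
  ∀ i j k : Fin n, i < j → j < k → w i < w k → ¬ w k < w j

lemma avoids132_of_antitone_mrow {w : Equiv.Perm (Fin n)} (h : Antitone (mrow w)) :
    Avoids132 w := fun _ _ _ hij hjk hik hkj =>
  let ⟨_, ha, hlt⟩ := exists_lt_mrow_lt hij hjk hik hkj
  (h ha.le).not_gt hlt

lemma Avoids132.inv {w : Equiv.Perm (Fin n)} (h : Avoids132 w) : Avoids132 w⁻¹ :=
  fun i j k hij hjk hik hkj =>
    h (w⁻¹ i) (w⁻¹ k) (w⁻¹ j) hik hkj (by simpa using hij) (by simpa using hjk)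

lemma Avoids132.mem_Rothe_of_lt {w : Equiv.Perm (Fin n)} (h : Avoids132 w) {i j j' : Fin n}
    (hij : (i, j) ∈ Rothe w) (hj' : j' < j) : (i, j') ∈ Rothe w := by
  obtain ⟨hj, hi⟩ := mem_Rothe_s19.1 hij
  refine mem_Rothe_s19.2 ⟨hj'.trans hj, lt_of_not_ge fun hle => ?_⟩
  have hne : w⁻¹ j' ≠ i := fun he => (hj'.trans hj).ne (by simp [← he])
  exact h (w⁻¹ j') i (w⁻¹ j) (hle.lt_of_ne hne) hi (by simpa using hj') (by simpa using hj)

lemma Avoids132.sub_rk {w : Equiv.Perm (Fin n)} (h : Avoids132 w) {i j : Fin n}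
    (hij : (i, j) ∈ Rothe w) : (j : ℕ) - rk w i j = j := by
  rw [sub_rk_eq_card_rotheRow hij, ← Fin.card_Iio]
  congr 1
  ext j'
  simpa using fun hj' => h.mem_Rothe_of_lt hij hj'

lemma Avoids132.leftJustified_eq {w : Equiv.Perm (Fin n)} (h : Avoids132 w) :
    leftJustified w = (Rothe w).image fun p => ((p.1 : ℕ), (p.2 : ℕ)) :=
  image_congr fun p hp => by simp [h.sub_rk hp]

lemma Avoids132.topJustified_eq {w : Equiv.Perm (Fin n)} (h : Avoids132 w) :
    topJustified w = (Rothe w).image fun p => ((p.1 : ℕ), (p.2 : ℕ)) :=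
  image_congr fun p hp => by
    have := h.inv.sub_rk (i := p.2) (j := p.1) (swap_mem_Rothe_inv.2 hp)
    rw [rk_inv] at this
    simp [this]

end RotheDiagram

/-- B_w = T_w if and only if w avoids the pattern 132. -/
theorem stmt19 {n : ℕ} (w : Equiv.Perm (Fin n)) :
    (Rothe w).image (fun p => ((p.1 : ℕ), (p.2 : ℕ) - rk w p.1 p.2)) =
      (Rothe w).image (fun p => ((p.1 : ℕ) - rk w p.1 p.2, (p.2 : ℕ))) ↔
    ∀ i j k : Fin n, i < j → j < k → w i < w k → ¬ w k < w j := by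
  change leftJustified w = topJustified w ↔ Avoids132 w
  constructor
  · intro h
    apply avoids132_of_antitone_mrow
    simpa only [card_rotheRow] using antitone_card_rotheRow h
  · intro h
    rw [h.leftJustified_eq, h.topJustified_eq]
end
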